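/- Let G be a finite simple graph without isolated vertices that contains no cycle of length 4 (equivalently, any two distinct vertices have at most one common neighbor). Then the map defined on the vertices of sd B(G) by sending A′ ⊎ A″ to ∅ ⊎ CN(A′) if |A′| ≥ 2, to CN(A″) ⊎ ∅ if |A″| ≥ 2, and to A′ ⊎ A″ otherwise, is a well-defined simplicial ℤ₂-map from sd B(G) to B(G) whose image is contained in a subcomplex of B(G) of dimension at most 1. -/

import Mathlib

open Finset

attribute [local instance] Classical.propDecidable

noncomputable section

variable {V : Type*}

/-- The set `CN(A)` of common neighbors of `A` in `G` (so `CN(∅) = V`). -/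
def CN [Fintype V] (G : SimpleGraph V) (A : Finset V) : Finset V :=
  Finset.univ.filter fun v => ∀ a ∈ A, G.Adj a v

/-- The shore of `S ⊆ V × {1,2}` lying over `b` (with `false` for the first copy of `V`
and `true` for the second). -/
def shore (S : Finset (V × Bool)) (b : Bool) : Finset V :=
  (S.filter fun p => p.2 = b).image Prod.fst

/-- `A' ⊎ A'' := (A' × {1}) ∪ (A'' × {2})`, with `false` for `1` and `true` for `2`. -/
def joinPair (A' A'' : Finset V) : Finset (V × Bool) :=
  A'.image (fun v => (v, false)) ∪ A''.image (fun v => (v, true))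

/-- The ℤ₂-action on subsets of `V × {1,2}`: interchange the two copies of `V`,
i.e. `A' ⊎ A'' ↦ A'' ⊎ A'`. -/
def swapFinset (S : Finset (V × Bool)) : Finset (V × Bool) :=
  S.image fun p => (p.1, !p.2)

/-- `G[A', A'']` is complete: every vertex of `A'` is adjacent to every vertex of `A''`. -/
def IsCompleteBip (G : SimpleGraph V) (A' A'' : Finset V) : Prop :=
  ∀ a ∈ A', ∀ b ∈ A'', G.Adj a b

/-- Simplices of the box complex `B(G)`: sets `A' ⊎ A''` with `A'`, `A''` disjoint,
`G[A', A'']` complete and `CN(A') ≠ ∅ ≠ CN(A'')`. -/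
def BoxSimplex [Fintype V] (G : SimpleGraph V) (S : Finset (V × Bool)) : Prop :=
  Disjoint (shore S false) (shore S true) ∧
  IsCompleteBip G (shore S false) (shore S true) ∧
  (CN G (shore S false)).Nonempty ∧ (CN G (shore S true)).Nonempty

/-- Simplices of the box complex `B₀(G)`: sets `A' ⊎ A''` with `A'`, `A''` disjoint and
`G[A', A'']` complete. -/
def Box0Simplex (G : SimpleGraph V) (S : Finset (V × Bool)) : Prop :=
  Disjoint (shore S false) (shore S true) ∧
  IsCompleteBip G (shore S false) (shore S true)

/-- Vertices of `B₁(G)`: sets `A' ⊎ A''` with `A'`, `A''` nonempty, disjoint and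
`G[A', A'']` complete. -/
def B1Vertex (G : SimpleGraph V) (S : Finset (V × Bool)) : Prop :=
  (shore S false).Nonempty ∧ (shore S true).Nonempty ∧
  Disjoint (shore S false) (shore S true) ∧
  IsCompleteBip G (shore S false) (shore S true)

/-- Simplices of the order complex `B₁(G)`: chains of vertices of `B₁(G)` under inclusion. -/
def B1Simplex (G : SimpleGraph V) (C : Finset (Finset (V × Bool))) : Prop :=
  (∀ T ∈ C, B1Vertex G T) ∧ IsChain (· ⊆ ·) (C : Set (Finset (V × Bool)))

/-- Simplices of the barycentric subdivision `sd K` of the complex `K` whose simplices are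
given by the predicate `P`: chains of nonempty simplices of `K` under inclusion. -/
def sdSimplex {γ : Type*} (P : Finset γ → Prop) (C : Finset (Finset γ)) : Prop :=
  (∀ S ∈ C, P S ∧ S.Nonempty) ∧ IsChain (· ⊆ ·) (C : Set (Finset γ))

/-- The retraction map on vertices of `sd B(G)` (nonempty simplices of `B(G)`):
`A' ⊎ A'' ↦ ∅ ⊎ CN(A')` if `|A'| ≥ 2`, `A' ⊎ A'' ↦ CN(A'') ⊎ ∅` if `|A''| ≥ 2`,
and `A' ⊎ A'' ↦ A' ⊎ A''` otherwise. -/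
def retractMap [Fintype V] (G : SimpleGraph V) (T : Finset (V × Bool)) :
    Finset (V × Bool) :=
  if 2 ≤ (shore T false).card then joinPair ∅ (CN G (shore T false))
  else if 2 ≤ (shore T true).card then joinPair (CN G (shore T true)) ∅
  else T

/-!
In a `C₄`-free graph, `|A| ≥ 2` forces `|CN(A)| ≤ 1`. Since a simplex `A' ⊎ A''` of `B(G)` has
`A'' ⊆ CN(A')`, at most one of its shores is big, so the map is well defined, and a big shore `A'`
is sent to the vertex `∅ ⊎ CN(A')`. Along a chain with largest element `M`, say with `|M'| ≥ 2` and
`CN(M') = {w}`, the members with a big first shore all go to `∅ ⊎ {w}` and the others are fixed;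
the latter are nested with first shores of size at most one, so the union of all images is some
`U ⊎ W` with `|U| ≤ 1`, `U ⊆ M'` and `W ⊆ {w}`: a face of the simplex `M' ⊎ CN(M')`.
-/

lemma mem_shore {S : Finset (V × Bool)} {b : Bool} {v : V} : v ∈ shore S b ↔ (v, b) ∈ S := by
  simp [shore]

lemma shore_mono {S T : Finset (V × Bool)} (h : S ⊆ T) (b : Bool) : shore S b ⊆ shore T b :=
  fun _ hv => mem_shore.2 (h (mem_shore.1 hv))

@[simp]
lemma shore_empty (b : Bool) : shore (∅ : Finset (V × Bool)) b = ∅ := by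
  simp [shore]

@[simp]
lemma shore_product_singleton_self (X : Finset V) (b : Bool) : shore (X ×ˢ {b}) b = X := by
  ext v; simp [mem_shore]

@[simp]
lemma shore_product_singleton_not (X : Finset V) (b : Bool) : shore (X ×ˢ {!b}) b = ∅ := by
  ext v; simp [mem_shore]

lemma shore_sup {ι : Type*} (s : Finset ι) (f : ι → Finset (V × Bool)) (b : Bool) :
    shore (s.sup f) b = s.sup fun i => shore (f i) b := by
  ext v; simp [mem_shore, mem_sup]

lemma card_shore_add_card_shore_not (S : Finset (V × Bool)) (b : Bool) :
    (shore S b).card + (shore S (!b)).card = S.card := by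
  have hcard : ∀ c, (shore S c).card = (S.filter fun p => p.2 = c).card := fun c =>
    card_image_of_injOn fun p hp q hq hpq =>
      Prod.ext hpq (((mem_filter.1 hp).2).trans (mem_filter.1 hq).2.symm)
  rw [hcard, hcard, ← card_filter_add_card_filter_not (s := S) (p := fun p => p.2 = b)]
  simp only [Bool.eq_not, ne_eq]

lemma shore_swapFinset (S : Finset (V × Bool)) (b : Bool) :
    shore (swapFinset S) b = shore S (!b) := by
  ext v; simp [mem_shore, swapFinset]

lemma swapFinset_product_singleton (X : Finset V) (b : Bool) :
    swapFinset (X ×ˢ {b}) = X ×ˢ {!b} := by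
  ext ⟨v, c⟩; simp [swapFinset, Bool.eq_not]

lemma joinPair_empty_left (X : Finset V) : joinPair ∅ X = X ×ˢ {true} := by
  ext ⟨v, c⟩; cases c <;> simp [joinPair]

lemma joinPair_empty_right (X : Finset V) : joinPair X ∅ = X ×ˢ {false} := by
  ext ⟨v, c⟩; cases c <;> simp [joinPair]

def C4Free (G : SimpleGraph V) : Prop :=
  ∀ u v : V, u ≠ v → ∀ w₁ w₂ : V,
    G.Adj u w₁ → G.Adj v w₁ → G.Adj u w₂ → G.Adj v w₂ → w₁ = w₂

section CommonNeighbors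

variable [Fintype V] {G : SimpleGraph V}

lemma mem_CN {A : Finset V} {v : V} : v ∈ CN G A ↔ ∀ a ∈ A, G.Adj a v := by
  simp [CN]

@[simp]
lemma CN_empty : CN G ∅ = univ := by
  ext v; simp [mem_CN]

lemma CN_anti {A B : Finset V} (h : A ⊆ B) : CN G B ⊆ CN G A :=
  fun _ hv => mem_CN.2 fun a ha => mem_CN.1 hv a (h ha)

lemma subset_CN_CN (A : Finset V) : A ⊆ CN G (CN G A) :=
  fun _ ha => mem_CN.2 fun _ hv => (mem_CN.1 hv _ ha).symm

lemma C4Free.card_CN_le_one (hG : C4Free G) {A : Finset V} (hA : 2 ≤ A.card) :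
    (CN G A).card ≤ 1 := by
  obtain ⟨u, hu, v, hv, huv⟩ := one_lt_card.1 hA
  exact card_le_one.2 fun w₁ h₁ w₂ h₂ =>
    hG u v huv w₁ w₂ (mem_CN.1 h₁ u hu) (mem_CN.1 h₁ v hv) (mem_CN.1 h₂ u hu)
      (mem_CN.1 h₂ v hv)

lemma C4Free.CN_eq_of_subset (hG : C4Free G) {A B : Finset V} (hAB : A ⊆ B) (hA : 2 ≤ A.card)
    (hB : (CN G B).Nonempty) : CN G A = CN G B :=
  (eq_of_subset_of_card_le (CN_anti hAB) ((hG.card_CN_le_one hA).trans hB.card_pos)).symm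

end CommonNeighbors

section BoxComplex

variable [Fintype V] {G : SimpleGraph V}

/-- Disjointness of the shores is automatic, as `G` has no loops. -/
lemma boxSimplex_iff {S : Finset (V × Bool)} :
    BoxSimplex G S ↔ ∀ b, shore S (!b) ⊆ CN G (shore S b) ∧ (CN G (shore S b)).Nonempty := by
  constructor
  · rintro ⟨-, hcomplete, hfalse, htrue⟩ (_ | _)
    · exact ⟨fun v hv => mem_CN.2 fun a ha => hcomplete a ha v hv, hfalse⟩
    · exact ⟨fun v hv => mem_CN.2 fun a ha => (hcomplete v hv a ha).symm, htrue⟩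
  · intro h
    obtain ⟨hsub, hfalse⟩ := h false
    refine ⟨disjoint_left.2 fun v hv hv' => G.irrefl (mem_CN.1 (hsub hv') v hv),
      fun a ha v hv => mem_CN.1 (hsub hv) a ha, hfalse, (h true).2⟩

lemma BoxSimplex.shore_not_subset_CN {T : Finset (V × Bool)} (hT : BoxSimplex G T) (b : Bool) :
    shore T (!b) ⊆ CN G (shore T b) :=
  (boxSimplex_iff.1 hT b).1

lemma BoxSimplex.CN_shore_nonempty {T : Finset (V × Bool)} (hT : BoxSimplex G T) (b : Bool) :
    (CN G (shore T b)).Nonempty :=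
  (boxSimplex_iff.1 hT b).2

lemma BoxSimplex.mono {S T : Finset (V × Bool)} (hT : BoxSimplex G T) (h : S ⊆ T) :
    BoxSimplex G S :=
  boxSimplex_iff.2 fun b =>
    ⟨(shore_mono h _).trans ((hT.shore_not_subset_CN b).trans (CN_anti (shore_mono h b))),
      (hT.CN_shore_nonempty b).mono (CN_anti (shore_mono h b))⟩

lemma boxSimplex_empty [Nonempty V] : BoxSimplex G ∅ :=
  boxSimplex_iff.2 fun _ => by simp

/-- `S` is a face of the simplex `A ⊎ CN(A)`, oriented by `b`. -/
lemma boxSimplex_of_shore_subset {S : Finset (V × Bool)} {A : Finset V} (b : Bool)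
    (hA : A.Nonempty) (hCA : (CN G A).Nonempty) (hb : shore S b ⊆ A)
    (hnb : shore S (!b) ⊆ CN G A) : BoxSimplex G S := by
  refine boxSimplex_iff.2 fun c => ?_
  obtain rfl | rfl := c.eq_or_eq_not b
  · exact ⟨hnb.trans (CN_anti hb), hCA.mono (CN_anti hb)⟩
  · rw [Bool.not_not]
    exact ⟨hb.trans ((subset_CN_CN A).trans (CN_anti hnb)),
      hA.mono ((subset_CN_CN A).trans (CN_anti hnb))⟩

lemma BoxSimplex.swapFinset {T : Finset (V × Bool)} (hT : BoxSimplex G T) :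
    BoxSimplex G (swapFinset T) :=
  boxSimplex_iff.2 fun b => by
    simpa only [shore_swapFinset, Bool.not_not] using boxSimplex_iff.1 hT (!b)

lemma BoxSimplex.card_shore_not_le_one (hG : C4Free G) {T : Finset (V × Bool)}
    (hT : BoxSimplex G T) {b : Bool} (hb : 2 ≤ (shore T b).card) : (shore T (!b)).card ≤ 1 :=
  (card_le_card (hT.shore_not_subset_CN b)).trans (hG.card_CN_le_one hb)

end BoxComplex

section Retraction

variable [Fintype V] {G : SimpleGraph V}

lemma retractMap_of_two_le_card_shore (hG : C4Free G) {T : Finset (V × Bool)}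
    (hT : BoxSimplex G T) {b : Bool} (hb : 2 ≤ (shore T b).card) :
    retractMap G T = CN G (shore T b) ×ˢ {!b} := by
  cases b
  · simp [retractMap, hb, joinPair_empty_left]
  · have hfalse : (shore T false).card ≤ 1 := hT.card_shore_not_le_one hG hb
    simp [retractMap, hb, Nat.lt_succ_of_le hfalse, joinPair_empty_right]

lemma retractMap_of_card_shore_lt_two {T : Finset (V × Bool)} (b : Bool)
    (hb : (shore T b).card < 2) (hnb : (shore T (!b)).card < 2) : retractMap G T = T := by
  obtain ⟨hfalse, htrue⟩ : (shore T false).card < 2 ∧ (shore T true).card < 2 := by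
    cases b <;> exact ⟨‹_›, ‹_›⟩
  rw [retractMap, if_neg hfalse.not_ge, if_neg htrue.not_ge]

lemma retractMap_nonempty (hG : C4Free G) {T : Finset (V × Bool)} (hT : BoxSimplex G T)
    (hne : T.Nonempty) : (retractMap G T).Nonempty := by
  by_cases h : ∃ b, 2 ≤ (shore T b).card
  · obtain ⟨b, hb⟩ := h
    rw [retractMap_of_two_le_card_shore hG hT hb]
    exact (hT.CN_shore_nonempty b).product (singleton_nonempty _)
  · push Not at h
    rwa [retractMap_of_card_shore_lt_two false (h _) (h _)]

lemma retractMap_swapFinset (hG : C4Free G) {T : Finset (V × Bool)} (hT : BoxSimplex G T) :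
    retractMap G (swapFinset T) = swapFinset (retractMap G T) := by
  by_cases h : ∃ b, 2 ≤ (shore T b).card
  · obtain ⟨b, hb⟩ := h
    have hb' : 2 ≤ (shore (swapFinset T) (!b)).card := by rwa [shore_swapFinset, Bool.not_not]
    rw [retractMap_of_two_le_card_shore hG hT hb,
      retractMap_of_two_le_card_shore hG hT.swapFinset hb',
      swapFinset_product_singleton, shore_swapFinset, Bool.not_not]
  · push Not at h
    rw [retractMap_of_card_shore_lt_two false (h _) (h _), retractMap_of_card_shore_lt_two false
      (by rw [shore_swapFinset]; exact h _) (by rw [shore_swapFinset]; exact h _)]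

lemma retractMap_eq_or_of_subset (hG : C4Free G) {M T : Finset (V × Bool)} (hM : BoxSimplex G M)
    {b : Bool} (hb : 2 ≤ (shore M b).card) (hTM : T ⊆ M) :
    retractMap G T = CN G (shore M b) ×ˢ {!b} ∨ (retractMap G T = T ∧ (shore T b).card < 2) := by
  by_cases hTb : 2 ≤ (shore T b).card
  · left
    rw [retractMap_of_two_le_card_shore hG (hM.mono hTM) hTb,
      hG.CN_eq_of_subset (shore_mono hTM b) hTb (hM.CN_shore_nonempty b)]
  · have hTnb : (shore T (!b)).card < 2 :=
      ((card_le_card (shore_mono hTM _)).trans (hM.card_shore_not_le_one hG hb)).trans_lt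
        one_lt_two
    exact Or.inr ⟨retractMap_of_card_shore_lt_two b (by omega) hTnb, by omega⟩

end Retraction

section Chains

lemma Finset.exists_forall_subset_of_isChain {α : Type*} {𝒞 : Finset (Finset α)}
    (hne : 𝒞.Nonempty) (h𝒞 : IsChain (· ⊆ ·) (𝒞 : Set (Finset α))) :
    ∃ M ∈ 𝒞, ∀ T ∈ 𝒞, T ⊆ M := by
  obtain ⟨M, hM, hMmax⟩ := 𝒞.exists_maximal hne
  refine ⟨M, hM, fun T hT => ?_⟩
  rcases eq_or_ne T M with rfl | hTM
  · exact subset_rfl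
  · rcases h𝒞 hT hM hTM with hTM | hMT
    · exact hTM
    · exact hMmax hT hMT

lemma card_sup_le_one_of_isChain {ι α : Type*} {s : Finset ι} {f : ι → Finset α}
    (hs : IsChain (fun i j => f i ⊆ f j) (s : Set ι)) (h : ∀ i ∈ s, (f i).card ≤ 1) :
    (s.sup f).card ≤ 1 := by
  refine card_le_one.2 fun x hx y hy => ?_
  obtain ⟨i, hi, hxi⟩ := mem_sup.1 hx
  obtain ⟨j, hj, hyj⟩ := mem_sup.1 hy
  rcases eq_or_ne i j with rfl | hij
  · exact card_le_one.1 (h i hi) x hxi y hyj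
  rcases hs hi hj hij with hsub | hsub
  · exact card_le_one.1 (h j hj) x (hsub hxi) y hyj
  · exact card_le_one.1 (h i hi) x hxi y (hsub hyj)

variable [Fintype V] {G : SimpleGraph V}

lemma boxSimplex_sup_retractMap_of_two_le (hG : C4Free G) {𝒞 : Finset (Finset (V × Bool))}
    (h𝒞 : IsChain (· ⊆ ·) (𝒞 : Set (Finset (V × Bool)))) {M : Finset (V × Bool)}
    (hMtop : ∀ T ∈ 𝒞, T ⊆ M) (hM : BoxSimplex G M) {b : Bool} (hb : 2 ≤ (shore M b).card) :
    BoxSimplex G (𝒞.sup (retractMap G)) ∧ (𝒞.sup (retractMap G)).card ≤ 2 := by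
  set small := 𝒞.filter fun T => (shore T b).card < 2
  have hcases T (hT : T ∈ 𝒞) := retractMap_eq_or_of_subset hG hM hb (hMtop T hT)
  have hshore_b : shore (𝒞.sup (retractMap G)) b ⊆ small.sup (shore · b) := by
    rw [shore_sup]
    refine Finset.sup_le fun T hT => ?_
    rcases hcases T hT with h | ⟨h, hsmall⟩
    · rw [h, shore_product_singleton_not]; exact empty_subset _
    · rw [h]; exact le_sup (f := (shore · b)) (mem_filter.2 ⟨hT, hsmall⟩)
  have hshore_nb : shore (𝒞.sup (retractMap G)) (!b) ⊆ CN G (shore M b) := by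
    rw [shore_sup]
    refine Finset.sup_le fun T hT => ?_
    rcases hcases T hT with h | ⟨h, -⟩
    · rw [h, shore_product_singleton_self]
    · rw [h]; exact (shore_mono (hMtop T hT) _).trans (hM.shore_not_subset_CN b)
  have hsmall_chain :
      IsChain (fun T U => shore T b ⊆ shore U b) (small : Set (Finset (V × Bool))) :=
    (h𝒞.mono (coe_subset.2 (filter_subset _ _))).mono_rel fun T U h => shore_mono h b
  have hsmall_card : (small.sup (shore · b)).card ≤ 1 :=
    card_sup_le_one_of_isChain hsmall_chain fun T hT => by
      have := (mem_filter.1 hT).2; omega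
  refine ⟨boxSimplex_of_shore_subset b (card_pos.1 (by omega)) (hM.CN_shore_nonempty b)
    (hshore_b.trans (Finset.sup_le fun T hT => shore_mono (hMtop T (mem_filter.1 hT).1) b))
    hshore_nb, ?_⟩
  rw [← card_shore_add_card_shore_not _ b]
  have := (card_le_card hshore_b).trans hsmall_card
  have := (card_le_card hshore_nb).trans (hG.card_CN_le_one hb)
  omega

lemma boxSimplex_sup_retractMap [Nonempty V] (hG : C4Free G) {𝒞 : Finset (Finset (V × Bool))}
    (h𝒞 : sdSimplex (BoxSimplex G) 𝒞) :
    BoxSimplex G (𝒞.sup (retractMap G)) ∧ (𝒞.sup (retractMap G)).card ≤ 2 := by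
  obtain ⟨hmem, hchain⟩ := h𝒞
  rcases 𝒞.eq_empty_or_nonempty with rfl | hne
  · exact ⟨boxSimplex_empty, by simp⟩
  obtain ⟨M, hM𝒞, hMtop⟩ := Finset.exists_forall_subset_of_isChain hne hchain
  have hM := (hmem M hM𝒞).1
  by_cases h : ∃ b, 2 ≤ (shore M b).card
  · obtain ⟨b, hb⟩ := h
    exact boxSimplex_sup_retractMap_of_two_le hG hchain hMtop hM hb
  push Not at h
  have hsup : 𝒞.sup (retractMap G) ⊆ M := Finset.sup_le fun T hT => by
    have hsmall c : (shore T c).card < 2 :=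
      (card_le_card (shore_mono (hMtop T hT) c)).trans_lt (h c)
    rw [retractMap_of_card_shore_lt_two false (hsmall _) (hsmall _)]
    exact hMtop T hT
  refine ⟨hM.mono hsup, (card_le_card hsup).trans ?_⟩
  have := h false
  have := h true
  rw [← card_shore_add_card_shore_not M false, Bool.not_false]
  omega

end Chains

theorem sd_box_retract_of_C4free_general [Fintype V] [Nonempty V] (G : SimpleGraph V)
    (hC4 : ∀ u v : V, u ≠ v → ∀ w₁ w₂ : V,
      G.Adj u w₁ → G.Adj v w₁ → G.Adj u w₂ → G.Adj v w₂ → w₁ = w₂) :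
    (∀ T : Finset (V × Bool), BoxSimplex G T → T.Nonempty →
      BoxSimplex G (retractMap G T) ∧ (retractMap G T).Nonempty ∧
        (retractMap G T).card ≤ 2) ∧
    (∀ T : Finset (V × Bool), BoxSimplex G T → T.Nonempty →
      retractMap G (swapFinset T) = swapFinset (retractMap G T)) ∧
    (∀ 𝒞 : Finset (Finset (V × Bool)), sdSimplex (BoxSimplex G) 𝒞 →
      BoxSimplex G (𝒞.sup (retractMap G)) ∧ (𝒞.sup (retractMap G)).card ≤ 2) := by
  refine ⟨fun T hT hne => ?_, fun T hT _ => retractMap_swapFinset hC4 hT,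
    fun 𝒞 h𝒞 => boxSimplex_sup_retractMap hC4 h𝒞⟩
  have hvertex : sdSimplex (BoxSimplex G) {T} := ⟨by simpa using ⟨hT, hne⟩, by simp⟩
  obtain ⟨hbox, hcard⟩ := boxSimplex_sup_retractMap hC4 hvertex
  rw [sup_singleton] at hbox hcard
  exact ⟨hbox, retractMap_nonempty hC4 hT hne, hcard⟩

/-- If `G` has no 4-cycle (equivalently, any two distinct vertices have at most one common
neighbor), then the above map is a well-defined simplicial ℤ₂-map from `sd B(G)` to `B(G)`
whose image lies in a subcomplex of `B(G)` of dimension at most 1: each vertex of `sd B(G)`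
is sent to a simplex of `B(G)` with at most 2 vertices, and each simplex of `sd B(G)`
(a chain) is carried to a simplex of `B(G)` with at most 2 vertices. -/
theorem sd_box_retract_of_C4free [Fintype V] [Nonempty V] (G : SimpleGraph V)
    (hiso : ∀ v : V, ∃ u, G.Adj v u)
    (hC4 : ∀ u v : V, u ≠ v → ∀ w₁ w₂ : V,
      G.Adj u w₁ → G.Adj v w₁ → G.Adj u w₂ → G.Adj v w₂ → w₁ = w₂) :
    (∀ T : Finset (V × Bool), BoxSimplex G T → T.Nonempty →
      BoxSimplex G (retractMap G T) ∧ (retractMap G T).Nonempty ∧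
        (retractMap G T).card ≤ 2) ∧
    (∀ T : Finset (V × Bool), BoxSimplex G T → T.Nonempty →
      retractMap G (swapFinset T) = swapFinset (retractMap G T)) ∧
    (∀ 𝒞 : Finset (Finset (V × Bool)), sdSimplex (BoxSimplex G) 𝒞 →
      BoxSimplex G (𝒞.sup (retractMap G)) ∧ (𝒞.sup (retractMap G)).card ≤ 2) :=
  sd_box_retract_of_C4free_general G hC4
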